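/- arXiv:2402.02177 — 6 statements merged into one kernel-verified Lean document; each statement's English description precedes it below -/
import Mathlib

section
/- Let G be a finite group and A an abelian subgroup of G. Then there exists a characteristic abelian subgroup N of G such that the index [G:N] is at most [G:A]^2. -/
/-!
The Chermak–Delgado measure `m(H) = |H| · |C_G(H)|` satisfies
`m(H) m(K) ≤ m(H ∩ K) m(⟨H, K⟩)` (the product formula, applied to `H, K` and to their
centralizers). Hence the subgroups of maximal measure are closed under intersection, and the
least of them, `M`, is characteristic. As `m(C_G(M)) ≥ m(M)`, also `M ≤ C_G(M)`, so `M` is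
abelian. Finally `[G:M] · m(M) ≤ |G|²` and `m(M) ≥ m(A) ≥ |A|²` give `[G:M] ≤ [G:A]²`.
-/

namespace Subgroup

variable {G : Type*} [Group G]

theorem card_mul_relIndex {H K : Subgroup G} (h : H ≤ K) :
    Nat.card H * H.relIndex K = Nat.card K := by
  rw [relIndex, ← Nat.card_congr (subgroupOfEquivOfLe h).toEquiv]
  exact card_mul_index _

theorem card_mul_card_le_card_inf_mul_card_sup [Finite G] (H K : Subgroup G) :
    Nat.card H * Nat.card K ≤ Nat.card ↥(H ⊓ K) * Nat.card ↥(H ⊔ K) :=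
  calc Nat.card H * Nat.card K
      = Nat.card ↥(H ⊓ K) * K.relIndex H * Nat.card K := by
        rw [← inf_relIndex_left, card_mul_relIndex inf_le_left]
    _ ≤ Nat.card ↥(H ⊓ K) * K.relIndex (H ⊔ K) * Nat.card K := by
        gcongr
        exact relIndex_le_of_le_right le_sup_left index_ne_zero_of_finite
    _ = Nat.card ↥(H ⊓ K) * Nat.card ↥(H ⊔ K) := by
        rw [mul_assoc, mul_comm (K.relIndex _), card_mul_relIndex le_sup_right]

theorem centralizer_inf_le_centralizer_sup (H K : Subgroup G) :
    centralizer (H : Set G) ⊓ centralizer (K : Set G) ≤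
      centralizer ((H ⊔ K : Subgroup G) : Set G) :=
  le_centralizer_iff.mpr <|
    sup_le (le_centralizer_iff.mpr inf_le_left) (le_centralizer_iff.mpr inf_le_right)

theorem centralizer_map_equiv {G' : Type*} [Group G'] (φ : G ≃* G') (H : Subgroup G) :
    centralizer ((H.map φ.toMonoidHom : Subgroup G') : Set G') =
      (centralizer (H : Set G)).map φ.toMonoidHom := by
  ext x
  simp only [map_equiv_eq_comap_symm', mem_comap, mem_centralizer_iff, SetLike.mem_coe]
  constructor
  · intro h y hy
    simpa using congrArg φ.symm (h (φ y) (by simpa using hy))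
  · intro h y hy
    simpa using congrArg φ (h _ hy)

noncomputable def chermakDelgadoMeasure (H : Subgroup G) : ℕ :=
  Nat.card H * Nat.card (centralizer (H : Set G))

theorem chermakDelgadoMeasure_map_equiv {G' : Type*} [Group G'] (φ : G ≃* G')
    (H : Subgroup G) :
    (H.map φ.toMonoidHom).chermakDelgadoMeasure = H.chermakDelgadoMeasure := by
  rw [chermakDelgadoMeasure, chermakDelgadoMeasure, centralizer_map_equiv,
    card_map_of_injective φ.injective, card_map_of_injective φ.injective]

variable (G) in
def chermakDelgadoLattice : Set (Subgroup G) :=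
  {H | ∀ K : Subgroup G, K.chermakDelgadoMeasure ≤ H.chermakDelgadoMeasure}

variable (G) in
noncomputable def chermakDelgadoSubgroup : Subgroup G :=
  sInf (chermakDelgadoLattice G)

theorem chermakDelgadoSubgroup_le {H : Subgroup G} (hH : H ∈ chermakDelgadoLattice G) :
    chermakDelgadoSubgroup G ≤ H :=
  sInf_le hH

theorem map_equiv_mem_chermakDelgadoLattice (φ : G ≃* G) {H : Subgroup G}
    (hH : H ∈ chermakDelgadoLattice G) : H.map φ.toMonoidHom ∈ chermakDelgadoLattice G := by
  intro K
  rw [chermakDelgadoMeasure_map_equiv]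
  exact hH K

variable [Finite G]

theorem chermakDelgadoMeasure_mul_le (H K : Subgroup G) :
    H.chermakDelgadoMeasure * K.chermakDelgadoMeasure ≤
      (H ⊓ K).chermakDelgadoMeasure * (H ⊔ K).chermakDelgadoMeasure := by
  have hcard := card_mul_card_le_card_inf_mul_card_sup H K
  have hcent := card_mul_card_le_card_inf_mul_card_sup
    (centralizer (H : Set G)) (centralizer (K : Set G))
  have hsup : centralizer (H : Set G) ⊔ centralizer (K : Set G) ≤
      centralizer ((H ⊓ K : Subgroup G) : Set G) :=
    sup_le (centralizer_le inf_le_left) (centralizer_le inf_le_right)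
  grw [card_le_of_le (centralizer_inf_le_centralizer_sup H K), card_le_of_le hsup] at hcent
  calc H.chermakDelgadoMeasure * K.chermakDelgadoMeasure
      = (Nat.card H * Nat.card K) *
          (Nat.card (centralizer (H : Set G)) * Nat.card (centralizer (K : Set G))) := by
        simp only [chermakDelgadoMeasure]; ring
    _ ≤ (Nat.card ↥(H ⊓ K) * Nat.card ↥(H ⊔ K)) *
          (Nat.card (centralizer ((H ⊔ K : Subgroup G) : Set G)) *
            Nat.card (centralizer ((H ⊓ K : Subgroup G) : Set G))) :=
        Nat.mul_le_mul hcard hcent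
    _ = (H ⊓ K).chermakDelgadoMeasure * (H ⊔ K).chermakDelgadoMeasure := by
        simp only [chermakDelgadoMeasure]; ring

theorem chermakDelgadoMeasure_le_centralizer (H : Subgroup G) :
    H.chermakDelgadoMeasure ≤ (centralizer (H : Set G)).chermakDelgadoMeasure := by
  rw [chermakDelgadoMeasure, chermakDelgadoMeasure, mul_comm]
  gcongr
  exact card_le_of_le (le_centralizer_iff.mpr le_rfl)

theorem card_sq_le_chermakDelgadoMeasure (A : Subgroup G) [IsMulCommutative A] :
    Nat.card A ^ 2 ≤ A.chermakDelgadoMeasure := by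
  rw [sq, chermakDelgadoMeasure]
  gcongr
  exact card_le_of_le (le_centralizer A)

theorem index_mul_chermakDelgadoMeasure_le (H : Subgroup G) :
    H.index * H.chermakDelgadoMeasure ≤ Nat.card G ^ 2 := by
  rw [chermakDelgadoMeasure, ← mul_assoc, index_mul_card, sq]
  gcongr
  exact card_le_card_group _

theorem chermakDelgadoMeasure_pos (H : Subgroup G) : 0 < H.chermakDelgadoMeasure :=
  Nat.mul_pos Nat.card_pos Nat.card_pos

theorem centralizer_mem_chermakDelgadoLattice {H : Subgroup G}
    (hH : H ∈ chermakDelgadoLattice G) : centralizer (H : Set G) ∈ chermakDelgadoLattice G :=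
  fun K ↦ (hH K).trans (chermakDelgadoMeasure_le_centralizer H)

theorem infClosed_chermakDelgadoLattice : InfClosed (chermakDelgadoLattice G) := by
  intro H hH K hK J
  refine (hH J).trans (Nat.le_of_mul_le_mul_right ?_ (chermakDelgadoMeasure_pos H))
  calc H.chermakDelgadoMeasure * H.chermakDelgadoMeasure
      = H.chermakDelgadoMeasure * K.chermakDelgadoMeasure := by rw [le_antisymm (hK H) (hH K)]
    _ ≤ (H ⊓ K).chermakDelgadoMeasure * (H ⊔ K).chermakDelgadoMeasure :=
        chermakDelgadoMeasure_mul_le H K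
    _ ≤ (H ⊓ K).chermakDelgadoMeasure * H.chermakDelgadoMeasure := by grw [hH (H ⊔ K)]

theorem chermakDelgadoSubgroup_mem : chermakDelgadoSubgroup G ∈ chermakDelgadoLattice G := by
  obtain ⟨H, hH⟩ := Finite.exists_max (chermakDelgadoMeasure (G := G))
  exact infClosed_chermakDelgadoLattice.sInf_mem_of_nonempty (Set.toFinite _) ⟨H, hH⟩ le_rfl

instance chermakDelgadoSubgroup_characteristic : (chermakDelgadoSubgroup G).Characteristic :=
  characteristic_iff_le_map.mpr fun φ ↦
    chermakDelgadoSubgroup_le (map_equiv_mem_chermakDelgadoLattice φ chermakDelgadoSubgroup_mem)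

instance isMulCommutative_chermakDelgadoSubgroup : IsMulCommutative (chermakDelgadoSubgroup G) :=
  le_centralizer_iff_isMulCommutative.mp <|
    chermakDelgadoSubgroup_le (centralizer_mem_chermakDelgadoLattice chermakDelgadoSubgroup_mem)

theorem index_le_index_sq_of_mem_chermakDelgadoLattice {M : Subgroup G}
    (hM : M ∈ chermakDelgadoLattice G) (A : Subgroup G) [IsMulCommutative A] :
    M.index ≤ A.index ^ 2 := by
  refine Nat.le_of_mul_le_mul_right ?_ (pow_pos (Nat.card_pos (α := A)) 2)
  calc M.index * Nat.card A ^ 2 ≤ M.index * M.chermakDelgadoMeasure := by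
        grw [card_sq_le_chermakDelgadoMeasure A, hM A]
    _ ≤ Nat.card G ^ 2 := index_mul_chermakDelgadoMeasure_le M
    _ = A.index ^ 2 * Nat.card A ^ 2 := by rw [← index_mul_card A, mul_pow]

end Subgroup

/-- Let `G` be a finite group and `A` an abelian subgroup of `G`. Then there exists a
characteristic abelian subgroup `N` of `G` with `[G:N] ≤ [G:A]^2`. -/
theorem stmt_0 {G : Type*} [Group G] [Finite G] (A : Subgroup G) (hA : IsMulCommutative A) :
    ∃ N : Subgroup G, N.Characteristic ∧ IsMulCommutative N ∧ N.index ≤ A.index ^ 2 :=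
  ⟨Subgroup.chermakDelgadoSubgroup G, inferInstance, inferInstance,
    Subgroup.index_le_index_sq_of_mem_chermakDelgadoLattice
      Subgroup.chermakDelgadoSubgroup_mem A⟩
end

section
/- Let n ≥ 3 with n ≠ 6 be an integer, and let A be a finite abelian group. Then any group G fitting into a short exact sequence 1 → S_n → G → A → 1 (where S_n is the symmetric group on n letters) is isomorphic to the direct product S_n × A. -/
/-!
An automorphism of `Sₙ` preserves the orders of centralizers. The centralizer of a product of
`k` disjoint transpositions has order `(n - 2k)! 2ᵏ k!`, which equals that of a transposition
`2 (n - 2)!` only for `k = 1`, or for `n = 6, k = 3`. So for `n ≠ 6` an automorphism `e` maps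
transpositions to transpositions; it then maps the star `swap a i` to a star `swap p (π i)`,
and `e` is conjugation by `π`. Since `Sₙ` (`n ≥ 3`) also has trivial center, it is complete,
and a complete normal subgroup `N ⊴ G` is a direct factor: `G = N × C_G(N)`, `C_G(N) ≅ G/N`.
-/

open Nat Subgroup

theorem two_pow_mul_factorial_lt_factorial {j : ℕ} (hj : 3 ≤ j) :
    2 ^ j * (j + 1)! < (2 * j)! := by
  induction j, hj using Nat.le_induction with
  | base => decide
  | succ j hj ih =>
    calc 2 ^ (j + 1) * (j + 1 + 1)! = 2 * (j + 2) * (2 ^ j * (j + 1)!) := by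
          rw [factorial_succ (j + 1), pow_succ]; ring
      _ < (2 * j + 2) * (2 * j + 1) * (2 * j)! :=
          Nat.mul_lt_mul_of_le_of_lt (by nlinarith) ih (by positivity)
      _ = (2 * (j + 1))! := by
          rw [show 2 * (j + 1) = 2 * j + 1 + 1 by ring, factorial_succ, factorial_succ]; ring

theorem eq_one_of_factorial_mul_two_pow_mul_factorial_eq {n k : ℕ} (hn : n ≠ 6) (hk : k ≠ 0)
    (hkn : 2 * k ≤ n) (h : (n - 2 * k)! * 2 ^ k * k ! = (n - 2)! * 2) : k = 1 := by
  obtain ⟨j, rfl⟩ := exists_eq_add_one_of_ne_zero hk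
  obtain ⟨m, rfl⟩ := exists_add_of_le hkn
  have h' : 2 ^ j * (j + 1)! = (m + 1).ascFactorial (2 * j) := by
    refine Nat.eq_of_mul_eq_mul_left (factorial_pos m) ?_
    rw [factorial_mul_ascFactorial]
    refine Nat.eq_of_mul_eq_mul_right two_pos ?_
    rw [show m + 2 * j = 2 * (j + 1) + m - 2 by omega, ← h,
      show 2 * (j + 1) + m - 2 * (j + 1) = m by omega, pow_succ]
    ring
  obtain rfl | rfl | rfl | hj : j = 0 ∨ j = 1 ∨ j = 2 ∨ 3 ≤ j := by omega
  · rfl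
  · norm_num [ascFactorial_succ, factorial] at h'
    rcases m with _ | m <;> nlinarith
  · norm_num [ascFactorial_succ, factorial] at h'
    have : 5 * (4 * (3 * 2)) ≤ (m + 1 + 3) * ((m + 1 + 2) * ((m + 1 + 1) * (m + 1))) := by
      gcongr <;> omega
    omega
  · have hle : (2 * j)! ≤ (m + 1).ascFactorial (2 * j) :=
      one_ascFactorial _ ▸ ascFactorial_le _ (by omega)
    have hlt := two_pow_mul_factorial_lt_factorial hj
    omega

theorem MulEquiv.nat_card_centralizer_singleton {G H : Type*} [Group G] [Group H] (e : G ≃* H)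
    (g : G) : Nat.card (centralizer {e g}) = Nat.card (centralizer {g}) :=
  Nat.card_congr (e.toEquiv.subtypeEquiv fun τ => by
    simp [mem_centralizer_singleton_iff, ← map_mul, e.injective.eq_iff]).symm

section CompleteKernel

variable {N G A : Type*} [Group N] [Group G] [Group A] {f : N →* G}

theorem MonoidHom.exists_inv_apply_mul_mem_centralizer_range (hf : Function.Injective f)
    [f.range.Normal] (hN : Function.Surjective (MulAut.conj : N →* MulAut N)) (y : G) :
    ∃ x, (f x)⁻¹ * y ∈ centralizer (f.range : Set G) := by
  let ι := MonoidHom.ofInjective hf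
  obtain ⟨x, hx⟩ := hN ((ι.trans (MulAut.conjNormal y)).trans ι.symm)
  refine ⟨x, mem_centralizer_iff.mpr ?_⟩
  rintro _ ⟨w, rfl⟩
  have hconj : f (x * w * x⁻¹) = y * f w * y⁻¹ := by
    have := congrArg (fun e : MulAut N => f (e w)) hx
    simpa [ι, MulAut.conj_apply, MonoidHom.apply_ofInjective_symm,
      MulAut.conjNormal_apply, MonoidHom.ofInjective_apply] using this
  rw [map_mul, map_mul, map_inv] at hconj
  calc f w * ((f x)⁻¹ * y) = (f x)⁻¹ * (f x * f w * (f x)⁻¹) * y := by group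
    _ = (f x)⁻¹ * y * f w := by rw [hconj]; group

theorem MonoidHom.mem_center_of_apply_mem_centralizer_range (hf : Function.Injective f) {x : N}
    (hx : f x ∈ centralizer (f.range : Set G)) : x ∈ center N :=
  mem_center_iff.mpr fun w => hf <| by
    simpa using mem_centralizer_iff.mp hx (f w) ⟨w, rfl⟩

theorem MonoidHom.nonempty_mulEquiv_prod_of_exact {g : G →* A} (hf : Function.Injective f)
    (hfg : f.range = g.ker) (hZ : center N = ⊥)
    (hN : Function.Surjective (MulAut.conj : N →* MulAut N)) (hg : Function.Surjective g) :
    Nonempty (G ≃* N × A) := by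
  have : f.range.Normal := hfg ▸ g.normal_ker
  set C := centralizer (f.range : Set G)
  have hcentral {x : N} (hx : f x ∈ C) : x = 1 := by
    simpa [hZ] using f.mem_center_of_apply_mem_centralizer_range hf hx
  have hdecomp (y : G) : ∃ x, ∃ z ∈ C, f x * z = y := by
    obtain ⟨x, hx⟩ := f.exists_inv_apply_mul_mem_centralizer_range hf hN y
    exact ⟨x, _, hx, mul_inv_cancel_left _ _⟩
  let Φ : N × C →* G := f.noncommCoprod C.subtype fun x z =>
    mem_centralizer_iff.mp z.2 (f x) ⟨x, rfl⟩
  have hΦ : Function.Bijective Φ := by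
    refine ⟨(injective_iff_map_eq_one Φ).mpr ?_, fun y => ?_⟩
    · rintro ⟨x, z⟩ h
      have hz : (z : G) = f x⁻¹ := by
        rw [map_inv]; exact eq_inv_of_mul_eq_one_right h
      have hx : x = 1 := inv_eq_one.mp (hcentral (hz ▸ z.2))
      rw [hx, inv_one, map_one] at hz
      exact Prod.ext hx (Subtype.ext hz)
    · obtain ⟨x, z, hz, rfl⟩ := hdecomp y
      exact ⟨(x, ⟨z, hz⟩), rfl⟩
  have hψ : Function.Bijective (g.comp C.subtype) := by
    refine ⟨(injective_iff_map_eq_one _).mpr ?_, fun a => ?_⟩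
    · rintro ⟨z, hz⟩ h
      obtain ⟨x, rfl⟩ : z ∈ f.range := hfg ▸ h
      simp [hcentral hz]
    · obtain ⟨y, rfl⟩ := hg a
      obtain ⟨x, z, hz, rfl⟩ := hdecomp y
      refine ⟨⟨z, hz⟩, ?_⟩
      have hker : f x ∈ g.ker := hfg ▸ ⟨x, rfl⟩
      simp [g.mem_ker.mp hker]
  exact ⟨(MulEquiv.ofBijective Φ hΦ).symm.trans
    (MulEquiv.prodCongr (MulEquiv.refl N) (MulEquiv.ofBijective _ hψ))⟩

end CompleteKernel

namespace Equiv.Perm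

variable {α : Type*} [DecidableEq α]

theorem commute_swap_of_apply_eq {σ : Perm α} {p q : α} (hp : σ p = p) (hq : σ q = q) :
    Commute σ (swap p q) := by
  have h := swap_apply_apply σ p q
  rw [hp, hq, eq_mul_inv_iff_mul_eq] at h
  exact h.symm

theorem IsSwap.eq_swap_apply {σ : Perm α} (hσ : σ.IsSwap) {x : α} (hx : σ x ≠ x) :
    σ = swap x (σ x) := by
  obtain ⟨a, b, -, rfl⟩ := hσ
  rcases (swap_apply_ne_self_iff.mp hx).2 with rfl | rfl
  · rw [swap_apply_left]
  · rw [swap_apply_right, swap_comm]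

theorem not_commute_swap_swap {a b c : α} (hab : a ≠ b) (hac : a ≠ c) (hbc : b ≠ c) :
    ¬Commute (swap a b) (swap a c) := fun h => by
  exact hac (by simpa [swap_apply_of_ne_of_ne hab.symm hbc] using congrArg (· b) h.eq)

theorem IsSwap.exists_swap_of_not_commute {σ τ : Perm α} (hσ : σ.IsSwap) (hτ : τ.IsSwap)
    (h : ¬Commute σ τ) :
    ∃ p q r, p ≠ q ∧ p ≠ r ∧ q ≠ r ∧ σ = swap p q ∧ τ = swap p r := by
  obtain ⟨u, v, huv, rfl⟩ := hσ
  have hne : swap u v ≠ τ := by rintro rfl; exact h (Commute.refl _)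
  by_cases hu : τ u = u
  · have hv : τ v ≠ v := fun hv => h (commute_swap_of_apply_eq hu hv).symm
    refine ⟨v, u, τ v, huv.symm, hv.symm, ?_, swap_comm u v, hτ.eq_swap_apply hv⟩
    rintro huτ
    exact hne (by rw [hτ.eq_swap_apply hv, ← huτ, swap_comm])
  · refine ⟨u, v, τ u, huv, Ne.symm hu, ?_, rfl, hτ.eq_swap_apply hu⟩
    rintro hvτ
    exact hne (by rw [hτ.eq_swap_apply hu, ← hvτ])

theorem center_eq_bot [Fintype α] (h3 : 2 < Fintype.card α) : center (Perm α) = ⊥ := by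
  refine eq_bot_iff.mpr fun x hx => ?_
  by_contra hx1
  obtain ⟨a, ha⟩ : ∃ a, x a ≠ a := not_forall.mp fun h => hx1 (Equiv.ext h)
  obtain ⟨c, -, hc⟩ := Finset.exists_mem_notMem_of_card_lt_card
    ((Finset.card_le_two : ({a, x a} : Finset α).card ≤ 2).trans_lt h3)
  simp only [Finset.mem_insert, Finset.mem_singleton, not_or] at hc
  have := congrArg (· a) (mem_center_iff.mp hx (swap (x a) c))
  rw [mul_apply, mul_apply, swap_apply_left, swap_apply_of_ne_of_ne ha.symm (Ne.symm hc.1)] at this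
  exact hc.2 this

theorem nat_card_centralizer_of_cycleType_eq_replicate [Fintype α] {σ : Perm α} {k : ℕ}
    (h : σ.cycleType = Multiset.replicate k 2) :
    Nat.card (centralizer {σ}) = (Fintype.card α - 2 * k)! * 2 ^ k * k ! := by
  rw [nat_card_centralizer, h]
  rcases eq_or_ne k 0 with rfl | hk
  · simp
  · simp [hk, mul_comm k 2]

theorem IsSwap.mulAut_apply [Fintype α] (h6 : Fintype.card α ≠ 6) (e : MulAut (Perm α))
    {σ : Perm α} (hσ : σ.IsSwap) : (e σ).IsSwap := by
  have hsq : e σ ^ 2 = 1 := by rw [← map_pow, ← hσ.orderOf, pow_orderOf_eq_one, map_one]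
  have hk := cycleType_of_pow_prime_eq_one hsq
  set k := (e σ).cycleType.card
  have hcard := e.nat_card_centralizer_singleton σ
  rw [nat_card_centralizer_of_cycleType_eq_replicate hk,
    nat_card_centralizer_of_cycleType_eq_replicate (k := 1) (isSwap_iff_cycleType.mp hσ)] at hcard
  simp only [mul_one, pow_one, factorial_one] at hcard
  have hk0 : k ≠ 0 := fun h0 => by
    rw [h0, Multiset.replicate_zero, cycleType_eq_zero, map_eq_one_iff _ e.injective] at hk
    obtain ⟨a, b, hab, rfl⟩ := hσ
    exact hab (swap_eq_one_iff.mp hk)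
  have hkn : 2 * k ≤ Fintype.card α := by
    simpa [hk, mul_comm] using (e σ).sum_cycleType_le
  rw [isSwap_iff_cycleType, hk, eq_one_of_factorial_mul_two_pow_mul_factorial_eq h6 hk0 hkn hcard]
  rfl

theorem exists_apply_ne_of_map_isSwap {e : MulAut (Perm α)}
    (he : ∀ σ : Perm α, σ.IsSwap → (e σ).IsSwap) {a b c : α}
    (hab : a ≠ b) (hac : a ≠ c) (hbc : b ≠ c) :
    ∃ p, ∀ i, a ≠ i → e (swap a i) p ≠ p := by
  have hswap {i : α} (hi : a ≠ i) : (e (swap a i)).IsSwap := he _ ⟨a, i, hi, rfl⟩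
  have hnc {i j : α} (hi : a ≠ i) (hj : a ≠ j) (hij : i ≠ j) :
      ¬Commute (e (swap a i)) (e (swap a j)) := fun h =>
    not_commute_swap_swap hi hj hij (by simpa using h.map e.symm)
  obtain ⟨p, q, r, hpq, hpr, hqr, hb, hc⟩ := (hswap hab).exists_swap_of_not_commute (hswap hac)
    (hnc hab hac hbc)
  refine ⟨p, fun i hi hp => ?_⟩
  have hib : i ≠ b := by rintro rfl; simp [hb, hpq.symm] at hp
  have hic : i ≠ c := by rintro rfl; simp [hc, hpr.symm] at hp
  have hq : e (swap a i) q ≠ q := fun hq => hnc hi hab hib (hb ▸ commute_swap_of_apply_eq hp hq)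
  have hr : e (swap a i) r ≠ r := fun hr => hnc hi hac hic (hc ▸ commute_swap_of_apply_eq hp hr)
  -- Otherwise the images of `swap a b`, `swap a c`, `swap a i` would form the triangle
  -- `swap p q`, `swap p r`, `swap q r`, forcing `swap a i = swap b c`.
  have hqr' : e (swap a i) = swap q r := by
    rw [(hswap hi).eq_swap_apply hq] at hr ⊢
    rcases (swap_apply_ne_self_iff.mp hr).2 with h | h
    · exact absurd h.symm hqr
    · rw [← h]
  have : swap a i = swap b c := e.injective <| by
    rw [hqr', ← swap_mul_swap_mul_swap hac.symm hbc.symm, map_mul, map_mul, swap_comm c a, hb,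
      hc, swap_comm p r, swap_mul_swap_mul_swap hpr.symm hqr.symm]
  exact hi.symm (by simpa [swap_apply_of_ne_of_ne hab hac] using congrArg (· a) this)

theorem exists_conj_eq_of_apply_ne [Finite α] {e : MulAut (Perm α)}
    (he : ∀ σ : Perm α, σ.IsSwap → (e σ).IsSwap) {a p : α}
    (hp : ∀ i, a ≠ i → e (swap a i) p ≠ p) : ∃ π, MulAut.conj π = e := by
  have he1 : e (swap a a) = 1 := by rw [swap_self, ← one_def, map_one]
  have hstar (i : α) : e (swap a i) = swap p (e (swap a i) p) := by
    by_cases hi : a = i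
    · rw [← hi, he1, one_apply, swap_self, one_def]
    · exact (he _ ⟨a, i, hi, rfl⟩).eq_swap_apply (hp i hi)
  have hinj : Function.Injective fun i => e (swap a i) p := fun i j hij => by
    have := congrArg (· a) (e.injective ((hstar i).trans ((congrArg (swap p) hij).trans
      (hstar j).symm)))
    simpa using this
  -- `π i` is the point that `e (swap a i)` exchanges with `p`
  set π := Equiv.ofBijective _ (Finite.injective_iff_bijective.mp hinj)
  have hπa : π a = p := by
    change e (swap a a) p = p
    rw [he1, one_apply]
  let L := (MulAut.conj π).toMonoidHom.eqLocus e.toMonoidHom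
  have hL (i : α) : swap a i ∈ L := by
    change MulAut.conj π (swap a i) = e (swap a i)
    rw [MulAut.conj_apply, ← swap_apply_apply, hπa, hstar i]
    rfl
  have heq : (MulAut.conj π).toMonoidHom = e.toMonoidHom := by
    refine MonoidHom.eq_of_eqOn_dense closure_isSwap ?_
    rintro _ ⟨u, v, -, rfl⟩
    exact SubmonoidClass.swap_mem_trans L (swap_comm a u ▸ hL u) (hL v)
  exact ⟨π, MulEquiv.toMonoidHom_injective heq⟩

theorem mulAut_conj_surjective [Fintype α] (h3 : 2 < Fintype.card α)
    (h6 : Fintype.card α ≠ 6) :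
    Function.Surjective (MulAut.conj : Perm α →* MulAut (Perm α)) := fun e => by
  obtain ⟨a, b, c, hab, hac, hbc⟩ := Fintype.two_lt_card_iff.mp h3
  have he (σ : Perm α) (hσ : σ.IsSwap) : (e σ).IsSwap := hσ.mulAut_apply h6 e
  obtain ⟨p, hp⟩ := exists_apply_ne_of_map_isSwap he hab hac hbc
  exact exists_conj_eq_of_apply_ne he hp

end Equiv.Perm

theorem stmt_1_general (n : ℕ) (hn : 3 ≤ n) (hn6 : n ≠ 6) {G A : Type*} [Group G] [CommGroup A]
    (f : Equiv.Perm (Fin n) →* G) (hf : Function.Injective f)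
    (g : G →* A) (hg : Function.Surjective g) (hexact : f.range = g.ker) :
    Nonempty (G ≃* Equiv.Perm (Fin n) × A) :=
  f.nonempty_mulEquiv_prod_of_exact hf hexact
    (Equiv.Perm.center_eq_bot (by rwa [Fintype.card_fin]))
    (Equiv.Perm.mulAut_conj_surjective (by rwa [Fintype.card_fin]) (by simpa using hn6)) hg

/-- For `n ≥ 3`, `n ≠ 6`, and `A` a finite abelian group, any group `G` fitting into a short
exact sequence `1 → Sₙ → G → A → 1` is isomorphic to the direct product `Sₙ × A`. -/
theorem stmt_1 (n : ℕ) (hn : 3 ≤ n) (hn6 : n ≠ 6) {G A : Type*} [Group G] [CommGroup A]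
    [Finite A] (f : Equiv.Perm (Fin n) →* G) (hf : Function.Injective f)
    (g : G →* A) (hg : Function.Surjective g) (hexact : f.range = g.ker) :
    Nonempty (G ≃* Equiv.Perm (Fin n) × A) :=
  stmt_1_general n hn hn6 f hf g hg hexact
end

section
/- Let G be a finite group fitting into a short exact sequence 1 → A_4 → G → ℤ/nℤ → 0 for some positive integer n. Then G contains a normal abelian subgroup of index at most 6. -/
/-!
Let `V = ⁅F, F⁆`, the Klein four-subgroup of `F ≅ A₄`, and let `C` be its centralizer in `G`.
Since `V` is normal in `G`, conjugation gives `G / C ↪ Aut V ≅ S₃`, so `C` has index at most 6.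
Since `V` is self-centralizing in `A₄`, `C ∩ F = V`, which is central in `C`; and `C / (C ∩ F)`
embeds in the cyclic group `G / F`, so `C` is abelian.
-/

section

open Subgroup

theorem MulAut.card_le_factorial (W : Type*) [Group W] [Finite W] :
    Nat.card (MulAut W) ≤ (Nat.card W - 1).factorial := by
  let restrict : MulAut W → Equiv.Perm {x : W // x ≠ 1} := fun σ =>
    Equiv.Perm.subtypePerm σ.toEquiv fun x => by simp
  have h_inj : Function.Injective restrict := by
    intro σ τ h
    ext x
    by_cases hx : x = 1
    · simp [hx]
    · exact congrArg Subtype.val (Equiv.ext_iff.mp h ⟨x, hx⟩)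
  have h_card : Nat.card {x : W // x ≠ 1} = Nat.card W - 1 := by
    classical
    have := Fintype.ofFinite W
    simp [Nat.card_eq_fintype_card, Fintype.card_subtype_compl]
  calc Nat.card (MulAut W) ≤ Nat.card (Equiv.Perm {x : W // x ≠ 1}) :=
        Nat.card_le_card_of_injective restrict h_inj
    _ = (Nat.card W - 1).factorial := by rw [Nat.card_perm, h_card]

variable {G H : Type*} [Group G] [Group H]

theorem MulAut.ker_conjNormal (V : Subgroup G) [V.Normal] :
    (MulAut.conjNormal : G →* MulAut V).ker = centralizer V := by
  ext g
  simp only [MonoidHom.mem_ker, mem_centralizer_iff, MulEquiv.ext_iff, MulAut.one_apply,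
    Subtype.ext_iff, MulAut.conjNormal_apply, Subtype.forall, SetLike.mem_coe]
  refine forall₂_congr fun v _ => ?_
  rw [mul_inv_eq_iff_eq_mul, eq_comm]

theorem Subgroup.index_centralizer_le_factorial (V : Subgroup G) [V.Normal] [Finite V] :
    (centralizer (V : Set G)).index ≤ (Nat.card V - 1).factorial := by
  rw [← MulAut.ker_conjNormal V, index_ker]
  exact (Nat.card_le_card_of_injective _ Subtype.val_injective).trans (MulAut.card_le_factorial V)

theorem Subgroup.isMulCommutative_centralizer_of_inf_le {F V : Subgroup G} [F.Normal]
    [IsCyclic (G ⧸ F)] (h : F ⊓ centralizer (V : Set G) ≤ V) :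
    IsMulCommutative (centralizer (V : Set G)) := by
  refine ((QuotientGroup.mk' F).comp (centralizer _).subtype)
    |>.isMulCommutative_of_isCyclic_of_ker_le_center fun c hc => ?_
  have hcV : (c : G) ∈ V := h ⟨by simpa using hc, c.2⟩
  exact mem_center_iff.mpr fun b => Subtype.ext ((mem_centralizer_iff.mp b.2) _ hcV).symm

theorem Subgroup.centralizer_eq_self_of_index_prime {K : Subgroup G} [K.Normal]
    [IsMulCommutative K] (hp : K.index.Prime) (hG : ¬ IsMulCommutative G) :
    centralizer (K : Set G) = K := by
  have hK : K ≤ centralizer K := le_centralizer K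
  obtain h | h := (Nat.dvd_prime hp).mp (index_dvd_of_le hK)
  · -- If `K` were central, `G` would be abelian since `G ⧸ K` is cyclic.
    have : IsCyclic (G ⧸ K) := isCyclic_of_prime_card (p := K.index) (hp := ⟨hp⟩) rfl
    refine absurd ((QuotientGroup.mk' K).isMulCommutative_of_isCyclic_of_ker_le_center ?_) hG
    rw [QuotientGroup.ker_mk', ← centralizer_univ, ← coe_top, ← index_eq_one.mp h]
    exact le_centralizer_iff.mp le_rfl
  · refine le_antisymm (relIndex_eq_one.mp ?_) hK
    have := relIndex_mul_index hK
    rw [h] at this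
    exact (Nat.mul_eq_right hp.ne_zero).mp this

theorem Subgroup.inf_centralizer_commutator_le (F : Subgroup G)
    (h : centralizer (_root_.commutator F : Set F) ≤ _root_.commutator F) :
    F ⊓ centralizer (⁅F, F⁆ : Subgroup G) ≤ ⁅F, F⁆ := by
  rintro x ⟨hxF, hxC⟩
  rw [← F.map_subtype_commutator] at hxC ⊢
  refine ⟨⟨x, hxF⟩, h <| mem_centralizer_iff.mpr fun v hv => Subtype.ext ?_, rfl⟩
  exact (mem_centralizer_iff.mp hxC) v ⟨v, hv, rfl⟩

theorem MulEquiv.map_commutator (e : G ≃* H) :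
    (commutator G).map e.toMonoidHom = commutator H := by
  rw [map_commutator_eq, MonoidHom.range_eq_top.mpr e.surjective, commutator_def]

theorem MulEquiv.card_commutator (e : G ≃* H) :
    Nat.card (commutator G) = Nat.card (commutator H) := by
  rw [← e.map_commutator, card_map_of_injective e.injective]

theorem MulEquiv.centralizer_commutator_le (e : G ≃* H)
    (h : centralizer (commutator H : Set H) ≤ commutator H) :
    centralizer (commutator G : Set G) ≤ commutator G := by
  intro x hx
  rw [← e.map_commutator] at h
  obtain ⟨y, hy, hyx⟩ := h (x := e x) <| mem_centralizer_iff.mpr fun _ ⟨v, hv, hve⟩ => by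
    rw [← hve]
    simpa using congrArg e ((mem_centralizer_iff.mp hx) v hv)
  rwa [← e.injective hyx]

namespace alternatingGroup

variable {α : Type*} [DecidableEq α] [Fintype α]

theorem card_commutator_of_card_eq_four (hα4 : Nat.card α = 4) :
    Nat.card (commutator (alternatingGroup α)) = 4 := by
  rw [← kleinFour_eq_commutator hα4, kleinFour_card_of_card_eq_four hα4]

theorem not_isMulCommutative_of_card_eq_four (hα4 : Nat.card α = 4) :
    ¬ IsMulCommutative (alternatingGroup α) := by
  intro h
  have h_top_eq_bot := (center_eq_top_iff.mpr h).symm.trans (center_eq_bot hα4.ge)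
  have := congrArg (fun K : Subgroup (alternatingGroup α) => Nat.card K) h_top_eq_bot
  rw [card_top, card_bot, card_of_card_eq_four hα4] at this
  omega

theorem centralizer_commutator_of_card_eq_four (hα4 : Nat.card α = 4) :
    centralizer (commutator (alternatingGroup α) : Set (alternatingGroup α)) =
      commutator (alternatingGroup α) := by
  rw [← kleinFour_eq_commutator hα4]
  have := normal_kleinFour hα4
  have := (kleinFour_isKleinFour hα4).isMulCommutative
  refine centralizer_eq_self_of_index_prime ?_ (not_isMulCommutative_of_card_eq_four hα4)
  have := (kleinFour α).card_mul_index
  rw [kleinFour_card_of_card_eq_four hα4, card_of_card_eq_four hα4] at this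
  rw [show (kleinFour α).index = 3 by omega]
  exact Nat.prime_three

end alternatingGroup

end

/-- If a finite group `G` fits into `1 → A₄ → G → ℤ/nℤ → 0` (cyclic quotient), then `G`
contains a normal abelian subgroup of index at most 6. -/
theorem stmt_10 {G : Type*} [Group G] [Finite G] (F : Subgroup G) (hFn : F.Normal)
    (hF : Nonempty (F ≃* alternatingGroup (Fin 4))) (hB : IsCyclic (G ⧸ F)) :
    ∃ N : Subgroup G, N.Normal ∧ IsMulCommutative N ∧ N.index ≤ 6 := by
  obtain ⟨e⟩ := hF
  have hA4 : Nat.card (Fin 4) = 4 := Nat.card_fin 4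
  have h_self : F ⊓ Subgroup.centralizer (⁅F, F⁆ : Subgroup G) ≤ ⁅F, F⁆ :=
    F.inf_centralizer_commutator_le <|
      e.centralizer_commutator_le (alternatingGroup.centralizer_commutator_of_card_eq_four hA4).le
  have h_card : Nat.card (⁅F, F⁆ : Subgroup G) = 4 := by
    rw [← F.map_subtype_commutator, Subgroup.card_map_of_injective F.subtype_injective,
      e.card_commutator, alternatingGroup.card_commutator_of_card_eq_four hA4]
  refine ⟨Subgroup.centralizer (⁅F, F⁆ : Subgroup G), inferInstance,
    Subgroup.isMulCommutative_centralizer_of_inf_le h_self, ?_⟩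
  exact (Subgroup.index_centralizer_le_factorial _).trans (by rw [h_card]; decide)
end

section
/- Let G be a finite group fitting into a short exact sequence 1 → A_4 → G → D_{2n} → 1 for some n ≥ 2, where D_{2n} is the dihedral group of order 2n. Then G contains a normal abelian subgroup of index at most 12. -/
/-!
Let `C` be the centralizer of `F ≅ A₄` in `G`. Conjugation embeds `G ⧸ C` into `Aut A₄`, which has
at most `8 · 3 = 24` elements because an automorphism is determined by the images of the generators
`(0 1 2)` and `(0 1)(2 3)`. As `A₄` has trivial center, `F ⊓ C = ⊥`, so the intersection `D` of `C`
with the preimage of the rotation subgroup of `D₂ₙ` embeds into the (cyclic) rotations and is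
abelian, of index at most `2 · 24`. The Klein four-group `V = ⁅F, F⁆` is normal, meets `D` trivially
and is centralized by it, so `V ⊔ D` is a normal abelian subgroup of index `[G : D] / 4 ≤ 12`.
-/

open Equiv Subgroup

theorem MulAut.card_le_of_closure_pair_eq_top {G : Type*} [Group G] [Finite G] {a b : G}
    (hab : closure {a, b} = ⊤) {m k : ℕ} (ha : a ^ m = 1) (ha1 : a ≠ 1) (hb : b ^ k = 1)
    (hb1 : b ≠ 1) :
    Nat.card (MulAut G) ≤
      Nat.card {x : G // x ^ m = 1 ∧ x ≠ 1} * Nat.card {x : G // x ^ k = 1 ∧ x ≠ 1} := by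
  rw [← Nat.card_prod]
  refine Nat.card_le_card_of_injective (fun φ : MulAut G =>
    (⟨φ a, by simp [← map_pow, ha], by simpa⟩, ⟨φ b, by simp [← map_pow, hb], by simpa⟩)) ?_
  intro φ ψ h
  simp only [Prod.mk.injEq, Subtype.mk.injEq] at h
  refine MulEquiv.toMonoidHom_injective <| MonoidHom.eq_of_eqOn_dense hab ?_
  rintro x (rfl | rfl)
  exacts [h.1, h.2]

namespace DihedralGroup

variable {n : ℕ}

def rotations (n : ℕ) : Subgroup (DihedralGroup n) := zpowers (r 1)

instance : IsMulCommutative (rotations n) := zpowers_isMulCommutative _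

theorem mem_rotations {g : DihedralGroup n} : g ∈ rotations n ↔ ∃ i, g = r i := by
  refine ⟨fun hg => ?_, fun ⟨i, hi⟩ => ?_⟩
  · obtain ⟨k, rfl⟩ := mem_zpowers_iff.mp hg
    exact ⟨k, r_one_zpow k⟩
  · obtain ⟨k, rfl⟩ := ZMod.intCast_surjective i
    exact mem_zpowers_iff.mpr ⟨k, hi ▸ r_one_zpow k⟩

theorem index_rotations : (rotations n).index = 2 := by
  refine index_eq_two_iff.mpr ⟨sr 0, fun g => ?_⟩
  cases g <;> simp [mem_rotations, r_mul_sr, sr_mul_sr]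

instance : (rotations n).Normal := normal_of_index_eq_two index_rotations

end DihedralGroup

namespace alternatingGroup

def finFourThreeCycle : alternatingGroup (Fin 4) :=
  ⟨c[0, 1, 2], Perm.mem_alternatingGroup.mpr (by decide)⟩

def finFourDoubleTransposition : alternatingGroup (Fin 4) :=
  ⟨c[0, 1] * c[2, 3], Perm.mem_alternatingGroup.mpr (by decide)⟩

theorem closure_finFour_generators :
    closure {finFourThreeCycle, finFourDoubleTransposition} = ⊤ := by
  set s := finFourThreeCycle
  set t := finFourDoubleTransposition
  have hs : s ∈ closure {s, t} := subset_closure (by simp)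
  have ht : t ∈ closure {s, t} := subset_closure (by simp)
  have hcover : ∀ x : alternatingGroup (Fin 4), ∃ i j : Fin 3, ∃ k : Fin 2,
      x = s ^ (i : ℕ) * t ^ (k : ℕ) * s ^ (j : ℕ) := by decide
  refine eq_top_iff.mpr fun x _ => ?_
  obtain ⟨i, j, k, rfl⟩ := hcover x
  exact mul_mem (mul_mem (pow_mem hs _) (pow_mem ht _)) (pow_mem hs _)

theorem card_mulAut_fin_four_le : Nat.card (MulAut (alternatingGroup (Fin 4))) ≤ 24 := by
  have h3 : Nat.card {x : alternatingGroup (Fin 4) // x ^ 3 = 1 ∧ x ≠ 1} = 8 := by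
    rw [Nat.card_eq_fintype_card]; decide
  have h2 : Nat.card {x : alternatingGroup (Fin 4) // x ^ 2 = 1 ∧ x ≠ 1} = 3 := by
    rw [Nat.card_eq_fintype_card]; decide
  have := MulAut.card_le_of_closure_pair_eq_top closure_finFour_generators (m := 3) (k := 2)
    (by decide) (by decide) (by decide) (by decide)
  rwa [h3, h2] at this

instance isMulCommutative_commutator_fin_four :
    IsMulCommutative (commutator (alternatingGroup (Fin 4))) :=
  have := kleinFour_isKleinFour (α := Fin 4) (by simp)
  kleinFour_eq_commutator (α := Fin 4) (by simp) ▸ IsKleinFour.isMulCommutative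

theorem card_commutator_fin_four : Nat.card (commutator (alternatingGroup (Fin 4))) = 4 := by
  rw [← kleinFour_eq_commutator (by simp), kleinFour_card_of_card_eq_four (by simp)]

end alternatingGroup

namespace Subgroup

variable {G : Type*} [Group G]

theorem index_centralizer_le_card_mulAut (F : Subgroup G) [F.Normal] [Finite F] :
    (centralizer (F : Set G)).index ≤ Nat.card (MulAut F) := by
  have hker : (MulAut.conjNormal (H := F)).ker ≤ centralizer (F : Set G) := by
    intro g hg x hx
    have hfix : g * x * g⁻¹ = x := by
      simpa using congrArg Subtype.val (DFunLike.congr_fun (MonoidHom.mem_ker.mp hg) ⟨x, hx⟩)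
    exact (mul_inv_eq_iff_eq_mul.mp hfix).symm
  calc (centralizer (F : Set G)).index ≤ (MulAut.conjNormal (H := F)).ker.index :=
        index_antitone hker
    _ = Nat.card (MulAut.conjNormal (H := F)).range := index_ker _
    _ ≤ Nat.card (MulAut F) := card_le_card_group _

theorem center_eq_bot_of_mulEquiv {H : Type*} [Group H] (e : G ≃* H)
    (h : center H = ⊥) : center G = ⊥ := by
  refine eq_bot_iff.mpr fun x hx => ?_
  have hex : e x ∈ center H := MulEquivClass.apply_mem_center e hx
  rw [h, mem_bot, MulEquiv.map_eq_one_iff] at hex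
  exact hex

theorem inf_centralizer_eq_bot {F : Subgroup G} (hF : center F = ⊥) :
    F ⊓ centralizer (F : Set G) = ⊥ := by
  refine eq_bot_iff.mpr fun x hx => ?_
  have hcenter : (⟨x, hx.1⟩ : F) ∈ center F :=
    mem_center_iff.mpr fun y => Subtype.ext (hx.2 y y.2)
  simpa [hF] using hcenter

theorem isMulCommutative_of_inf_ker_eq_bot {Q : Type*} [Group Q] (f : G →* Q)
    (R : Subgroup Q) [IsMulCommutative R] {D : Subgroup G} (hDR : D ≤ R.comap f)
    (hD : D ⊓ f.ker = ⊥) : IsMulCommutative D := by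
  refine .of_setLike_mul_comm fun x hx y hy => ?_
  have hxy : x * y * (y * x)⁻¹ ∈ D ⊓ f.ker := by
    refine mem_inf.mpr ⟨mul_mem (mul_mem hx hy) (inv_mem (mul_mem hy hx)), ?_⟩
    rw [MonoidHom.mem_ker, map_mul, map_inv, map_mul, map_mul,
      setLike_mul_comm (mem_comap.mp (hDR hx)) (mem_comap.mp (hDR hy)), mul_inv_cancel]
  rwa [hD, mem_bot, mul_inv_eq_one] at hxy

theorem isMulCommutative_sup {H K : Subgroup G} [IsMulCommutative H]
    [IsMulCommutative K] (hKH : K ≤ centralizer (H : Set G)) :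
    IsMulCommutative (H ⊔ K : Subgroup G) := by
  rw [← closure_eq H, ← closure_eq K, ← closure_union]
  refine isMulCommutative_closure ?_
  rintro x (hx | hx) y (hy | hy)
  · exact setLike_mul_comm hx hy
  · exact hKH hy x hx
  · exact (hKH hx y hy).symm
  · exact setLike_mul_comm hx hy

theorem index_sup_mul_card_of_inf_eq_bot {H K : Subgroup G} [K.Normal]
    (h : H ⊓ K = ⊥) : (H ⊔ K).index * Nat.card H = K.index := by
  rw [← relIndex_mul_index (le_sup_right : K ≤ H ⊔ K), relIndex_sup_right, ← inf_relIndex_right,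
    inf_comm, h, relIndex_bot_left, mul_comm]

theorem commutator_self_eq_map {H : Type*} [Group H] (F : Subgroup G) (e : H ≃* F) :
    ⁅F, F⁆ = (_root_.commutator H).map (F.subtype.comp e.toMonoidHom) := by
  rw [map_commutator_eq, MonoidHom.range_comp, MonoidHom.range_eq_top.mpr e.surjective,
    ← MonoidHom.range_eq_map, range_subtype]

variable {F : Subgroup G}

theorem inf_centralizer_eq_bot_of_mulEquiv_alternatingGroup_four
    (e : F ≃* alternatingGroup (Fin 4)) :
    F ⊓ centralizer (F : Set G) = ⊥ :=
  inf_centralizer_eq_bot <| center_eq_bot_of_mulEquiv e (alternatingGroup.center_eq_bot (by simp))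

theorem index_centralizer_le_of_mulEquiv_alternatingGroup_four [F.Normal] [Finite F]
    (e : F ≃* alternatingGroup (Fin 4)) :
    (centralizer (F : Set G)).index ≤ 24 :=
  calc (centralizer (F : Set G)).index ≤ Nat.card (MulAut F) := index_centralizer_le_card_mulAut F
    _ = Nat.card (MulAut (alternatingGroup (Fin 4))) := Nat.card_congr (MulAut.congr e).toEquiv
    _ ≤ 24 := alternatingGroup.card_mulAut_fin_four_le

theorem isMulCommutative_commutator_of_mulEquiv_alternatingGroup_four
    (e : F ≃* alternatingGroup (Fin 4)) : IsMulCommutative (⁅F, F⁆ : Subgroup G) :=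
  commutator_self_eq_map F e.symm ▸ inferInstance

theorem card_commutator_of_mulEquiv_alternatingGroup_four
    (e : F ≃* alternatingGroup (Fin 4)) : Nat.card (⁅F, F⁆ : Subgroup G) = 4 := by
  rw [commutator_self_eq_map F e.symm,
    card_map_of_injective (f := F.subtype.comp e.symm.toMonoidHom)
      (F.subtype_injective.comp e.symm.injective),
    alternatingGroup.card_commutator_fin_four]

end Subgroup

theorem stmt_11_general {G : Type*} [Group G] [Finite G] (F : Subgroup G) (hFn : F.Normal)
    (hF : Nonempty (F ≃* alternatingGroup (Fin 4)))
    (n : ℕ) (hB : Nonempty ((G ⧸ F) ≃* DihedralGroup n)) :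
    ∃ N : Subgroup G, N.Normal ∧ IsMulCommutative N ∧ N.index ≤ 12 := by
  obtain ⟨e⟩ := hF
  obtain ⟨φ⟩ := hB
  let ψ : G →* DihedralGroup n := φ.toMonoidHom.comp (QuotientGroup.mk' F)
  have hψ : Function.Surjective ψ := φ.surjective.comp (QuotientGroup.mk'_surjective F)
  have hkerψ : ψ.ker = F := by simp [ψ]
  let C := centralizer (F : Set G)
  let D := (DihedralGroup.rotations n).comap ψ ⊓ C
  let V := ⁅F, F⁆
  have hFC : F ⊓ C = ⊥ := inf_centralizer_eq_bot_of_mulEquiv_alternatingGroup_four e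
  have hVD : V ⊓ D = ⊥ := le_bot_iff.mp (hFC ▸ inf_le_inf (commutator_le_self F) inf_le_right)
  have hDF : D ⊓ ψ.ker = ⊥ := by
    rw [hkerψ, inf_comm]
    exact le_bot_iff.mp (hFC ▸ inf_le_inf_left F inf_le_right)
  have : IsMulCommutative V := isMulCommutative_commutator_of_mulEquiv_alternatingGroup_four e
  have : IsMulCommutative D := isMulCommutative_of_inf_ker_eq_bot ψ _ inf_le_left hDF
  have hDindex : D.index ≤ 2 * 24 := by
    refine index_inf_le.trans (Nat.mul_le_mul ?_ ?_)
    · rw [index_comap_of_surjective _ hψ, DihedralGroup.index_rotations]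
    · exact index_centralizer_le_of_mulEquiv_alternatingGroup_four e
  refine ⟨V ⊔ D, inferInstance,
    isMulCommutative_sup (inf_le_right.trans (centralizer_le (commutator_le_self F))), ?_⟩
  have hindex := index_sup_mul_card_of_inf_eq_bot hVD
  rw [card_commutator_of_mulEquiv_alternatingGroup_four e] at hindex
  omega

/-- If a finite group `G` fits into `1 → A₄ → G → D₂ₙ → 1` with `D₂ₙ` dihedral of order `2n`,
`n ≥ 2`, then `G` contains a normal abelian subgroup of index at most 12. -/
theorem stmt_11 {G : Type*} [Group G] [Finite G] (F : Subgroup G) (hFn : F.Normal)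
    (hF : Nonempty (F ≃* alternatingGroup (Fin 4)))
    (n : ℕ) (hn : 2 ≤ n) (hB : Nonempty ((G ⧸ F) ≃* DihedralGroup n)) :
    ∃ N : Subgroup G, N.Normal ∧ IsMulCommutative N ∧ N.index ≤ 12 :=
  stmt_11_general F hFn hF n hB
end

section
/- Let G be a finite group fitting into a short exact sequence 1 → S_4 → G → ℤ/nℤ → 0. Then G is isomorphic to S_4 × ℤ/nℤ and contains a normal abelian subgroup of index 6. -/
/-!
`S₄` is a complete group: its centre is trivial and all its automorphisms are inner. For the
normal subgroup `K = f(S₄)` of `G` this means that conjugation by any `x ∈ G` agrees on `K` with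
conjugation by an element of `K`, so `G = K · C_G(K)`, while `K ∩ C_G(K) = Z(K) = 1`. Both factors
being normal, `G ≅ K × C_G(K)`, and `C_G(K) ≅ G ⧸ K ≅ ℤ/nℤ`. An automorphism of `S₄` sends the
generators `(0 1)` and `(0 1 2 3)` to a pair satisfying the same relations, and a finite check
shows that every such pair is conjugate to the original one. Finally, the Klein four-group
`V ⊴ S₄` gives the normal abelian subgroup `V × ℤ/nℤ` of index 6.
-/

open Equiv Equiv.Perm Subgroup

namespace Subgroup

variable {G K : Type*} [Group G] [Group K]

theorem isComplement'_of_disjoint_of_sup_eq_top {H N : Subgroup G} [N.Normal]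
    (hd : Disjoint H N) (hs : H ⊔ N = ⊤) : IsComplement' H N :=
  isComplement'_of_disjoint_and_mul_eq_univ hd (by rw [← mul_normal, hs, coe_top])

noncomputable def IsComplement'.mulEquivProd {H N : Subgroup G} [H.Normal] [N.Normal]
    (h : IsComplement' H N) : H × N ≃* G :=
  MulEquiv.ofBijective
    (H.subtype.noncommCoprod N.subtype fun a b ↦
      commute_of_normal_of_disjoint H N ‹_› ‹_› h.disjoint a b a.2 b.2)
    h

theorem disjoint_range_centralizer_of_center_eq_bot {f : K →* G} (hf : Function.Injective f)
    (hK : center K = ⊥) : Disjoint f.range (centralizer f.range) := by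
  rw [disjoint_def]
  rintro _ ⟨y, rfl⟩ hy
  suffices y ∈ center K by rw [hK, mem_bot] at this; rw [this, map_one]
  rw [mem_center_iff]
  intro z
  apply hf
  simpa only [map_mul] using hy (f z) ⟨z, rfl⟩

theorem range_sup_centralizer_eq_top_of_forall_mulAut_eq_conj {f : K →* G}
    (hf : Function.Injective f) [f.range.Normal]
    (hK : ∀ φ : MulAut K, ∃ k, φ = MulAut.conj k) : f.range ⊔ centralizer f.range = ⊤ := by
  rw [eq_top_iff]
  intro x _
  let e := MonoidHom.ofInjective hf
  obtain ⟨k, hk⟩ := hK ((e.trans (MulAut.conjNormal x)).trans e.symm)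
  have hconj : ∀ y, x * f y * x⁻¹ = f k * f y * (f k)⁻¹ := by
    intro y
    have := congrArg (fun y' : f.range ↦ (y' : G)) (congrArg e (DFunLike.congr_fun hk y))
    simpa [e, MonoidHom.ofInjective_apply] using this
  have hmem : (f k)⁻¹ * x ∈ centralizer f.range := by
    rw [mem_centralizer_iff]
    rintro _ ⟨y, rfl⟩
    calc f y * ((f k)⁻¹ * x) = (f k)⁻¹ * (x * f y * x⁻¹) * f k * ((f k)⁻¹ * x) := by
          rw [hconj y]; group
      _ = (f k)⁻¹ * x * f y := by group
  simpa using mul_mem_sup (f.mem_range.2 ⟨k, rfl⟩) hmem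

theorem exists_normal_isMulCommutative_index_of_mulEquiv_prod {H A : Type*} [Group H]
    [CommGroup A] (e : G ≃* H × A) (N : Subgroup H) [N.Normal] [IsMulCommutative N] :
    ∃ M : Subgroup G, M.Normal ∧ IsMulCommutative M ∧ M.index = N.index := by
  have : IsMulCommutative (N.prod (⊤ : Subgroup A)) :=
    .of_setLike_mul_comm fun _ ha _ hb ↦ Prod.ext (setLike_mul_comm ha.1 hb.1) (mul_comm _ _)
  refine ⟨(N.prod ⊤).comap e.toMonoidHom, inferInstance,
    comap_injective_isMulCommutative _ e.injective, ?_⟩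
  rw [index_comap_of_surjective _ e.surjective, index_prod, index_top, mul_one]

end Subgroup

namespace Equiv.Perm

theorem center_fin_four_eq_bot : center (Perm (Fin 4)) = ⊥ := by
  rw [eq_bot_iff]
  intro y hy
  rw [mem_center_iff] at hy
  rw [mem_bot]
  revert y
  decide

set_option maxRecDepth 3000 in
theorem exists_conj_eq_swap_finRotate_of_rels (a b : Perm (Fin 4)) (ha : a * a = 1)
    (hb : b ^ 4 = 1) (hb' : b * b ≠ 1) (hab : (a * b) ^ 3 = 1) :
    ∃ k : Perm (Fin 4), a = k * swap 0 1 * k⁻¹ ∧ b = k * finRotate 4 * k⁻¹ := by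
  have key : ∀ a b : Perm (Fin 4), a * a = 1 ∧ b ^ 4 = 1 ∧ b * b ≠ 1 ∧ (a * b) ^ 3 = 1 →
      ∃ k : Perm (Fin 4), a = k * swap 0 1 * k⁻¹ ∧ b = k * finRotate 4 * k⁻¹ := by
    decide
  exact key a b ⟨ha, hb, hb', hab⟩

theorem closure_swap_finRotate_fin_four :
    closure {swap 0 1, finRotate 4} = (⊤ : Subgroup (Perm (Fin 4))) := by
  have := closure_cycle_adjacent_swap (isCycle_finRotate (n := 2)) support_finRotate 0
  rwa [Set.pair_comm] at this

theorem exists_mulAut_fin_four_eq_conj (φ : MulAut (Perm (Fin 4))) :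
    ∃ k, φ = MulAut.conj k := by
  obtain ⟨k, hs, hc⟩ := exists_conj_eq_swap_finRotate_of_rels (φ (swap 0 1)) (φ (finRotate 4))
    (by rw [← map_mul, (by decide : swap (0 : Fin 4) 1 * swap 0 1 = 1), map_one])
    (by rw [← map_pow, (by decide : finRotate 4 ^ 4 = 1), map_one])
    (by rw [← map_mul, MulEquiv.map_ne_one_iff]; decide)
    (by rw [← map_mul, ← map_pow,
      (by decide : (swap (0 : Fin 4) 1 * finRotate 4) ^ 3 = 1), map_one])
  refine ⟨k, MulEquiv.toMonoidHom_injective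
    (MonoidHom.eq_of_eqOn_dense closure_swap_finRotate_fin_four ?_)⟩
  rintro x (rfl | rfl)
  · exact hs
  · exact hc

theorem exists_normal_isMulCommutative_index_six :
    ∃ N : Subgroup (Perm (Fin 4)), N.Normal ∧ IsMulCommutative N ∧ N.index = 6 := by
  have hcard : Nat.card (Fin 4) = 4 := Nat.card_fin 4
  have := alternatingGroup.characteristic_kleinFour hcard
  have := (alternatingGroup.kleinFour_isKleinFour hcard).isMulCommutative
  set V := (alternatingGroup.kleinFour (Fin 4)).map (alternatingGroup (Fin 4)).subtype
  refine ⟨V, inferInstance, inferInstance, ?_⟩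
  have h := card_mul_index V
  rw [card_map_of_injective (subtype_injective _),
    alternatingGroup.kleinFour_card_of_card_eq_four hcard, Nat.card_perm, hcard] at h
  norm_num [Nat.factorial] at h
  omega

end Equiv.Perm

theorem stmt_12_general (n : ℕ) {G : Type*} [Group G]
    (f : Equiv.Perm (Fin 4) →* G) (hf : Function.Injective f)
    (g : G →* Multiplicative (ZMod n)) (hg : Function.Surjective g)
    (hexact : f.range = g.ker) :
    Nonempty (G ≃* Equiv.Perm (Fin 4) × Multiplicative (ZMod n)) ∧
      ∃ N : Subgroup G, N.Normal ∧ IsMulCommutative N ∧ N.index = 6 := by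
  have : f.range.Normal := hexact ▸ g.normal_ker
  have hcompl : IsComplement' f.range (centralizer f.range) :=
    isComplement'_of_disjoint_of_sup_eq_top
      (disjoint_range_centralizer_of_center_eq_bot hf center_fin_four_eq_bot)
      (range_sup_centralizer_eq_top_of_forall_mulAut_eq_conj hf exists_mulAut_fin_four_eq_conj)
  let e : G ≃* Perm (Fin 4) × Multiplicative (ZMod n) :=
    hcompl.mulEquivProd.symm.trans <| (MonoidHom.ofInjective hf).symm.prodCongr <|
      hcompl.symm.QuotientMulEquiv.symm.trans <|
        (QuotientGroup.quotientMulEquivOfEq hexact).trans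
          (QuotientGroup.quotientKerEquivOfSurjective g hg)
  obtain ⟨N, _, _, hN⟩ := exists_normal_isMulCommutative_index_six
  exact ⟨⟨e⟩, hN ▸ exists_normal_isMulCommutative_index_of_mulEquiv_prod e N⟩

/-- If a finite group `G` fits into `1 → S₄ → G → ℤ/nℤ → 0`, then `G` is isomorphic to
`S₄ × ℤ/nℤ` and contains a normal abelian subgroup of index 6. -/
theorem stmt_12 (n : ℕ) (hn : 0 < n) {G : Type*} [Group G]
    (f : Equiv.Perm (Fin 4) →* G) (hf : Function.Injective f)
    (g : G →* Multiplicative (ZMod n)) (hg : Function.Surjective g)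
    (hexact : f.range = g.ker) :
    Nonempty (G ≃* Equiv.Perm (Fin 4) × Multiplicative (ZMod n)) ∧
      ∃ N : Subgroup G, N.Normal ∧ IsMulCommutative N ∧ N.index = 6 :=
  stmt_12_general n f hf g hg hexact
end

section
/- Let G be a finite group fitting into a short exact sequence 1 → S_4 → G → S_4 → 1. Then G contains a normal abelian subgroup of index at most 36. -/
/-!
`S₄` is complete: its center is trivial and all its automorphisms are inner. Hence conjugation
by any `g : G` acts on the normal subgroup `F ≅ S₄` as conjugation by some `f ∈ F`, so
`f⁻¹ g` centralizes `F`. Together with `F ∩ C_G(F) = 1` this makes `G` the internal direct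
product `F × C_G(F)`, and `C_G(F) ≅ G / F ≅ S₄`. The product of the two Klein four-subgroups
is then normal and abelian of index `6 · 6 = 36`.
-/

open Equiv Function Subgroup

theorem MulAut.congr_conj {H K : Type*} [Group H] [Group K] (e : H ≃* K) (h : H) :
    MulAut.congr e (MulAut.conj h) = MulAut.conj (e h) := by
  ext; simp

theorem MulAut.conj_bijective_congr {H K : Type*} [Group H] [Group K] (e : H ≃* K) :
    Bijective (MulAut.conj : H →* MulAut H) ↔ Bijective (MulAut.conj : K →* MulAut K) := by
  have hcomm : MulAut.congr e ∘ MulAut.conj = MulAut.conj ∘ e := funext (MulAut.congr_conj e)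
  rw [← (MulAut.congr e).bijective.of_comp_iff', hcomm, e.bijective.of_comp_iff]

namespace Equiv.Perm

set_option maxRecDepth 10000 in
theorem exists_conj_finRotate_swap_fin_four : ∀ a b : Perm (Fin 4),
    a ^ 4 = 1 ∧ a ^ 2 ≠ 1 ∧ b ^ 2 = 1 ∧ (a * b) ^ 3 = 1 →
    ∃ g : Perm (Fin 4), g * finRotate 4 * g⁻¹ = a ∧ g * swap 0 1 * g⁻¹ = b := by
  decide

theorem closure_finRotate_swap_fin_four : closure {finRotate 4, swap (0 : Fin 4) 1} = ⊤ := by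
  simpa using closure_cycle_adjacent_swap (isCycle_finRotate (n := 2))
    (support_finRotate (n := 2)) 0

/-- An automorphism maps `(finRotate 4, swap 0 1)` to a pair satisfying the same relations;
all such pairs are conjugate, and the pair generates `S₄`. -/
theorem mulAut_conj_bijective_fin_four :
    Bijective (MulAut.conj : Perm (Fin 4) →* MulAut (Perm (Fin 4))) := by
  refine ⟨(injective_iff_map_eq_one _).mpr fun z hz => ?_, fun φ => ?_⟩
  · have hz' : ∀ w, z * w * z⁻¹ = w := fun w => by simpa using DFunLike.congr_fun hz w
    exact (show ∀ z : Perm (Fin 4), (∀ w, z * w * z⁻¹ = w) → z = 1 by decide) z hz'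
  · have hpow : ∀ x n, φ x ^ n = 1 ↔ x ^ n = 1 := fun x n => by
      rw [← map_pow, MulEquiv.map_eq_one_iff]
    obtain ⟨g, hr, hs⟩ := exists_conj_finRotate_swap_fin_four (φ (finRotate 4)) (φ (swap 0 1))
      ⟨(hpow _ 4).2 (by decide), mt (hpow _ 2).1 (by decide), (hpow _ 2).2 (by decide),
        by rw [← map_mul, hpow]; decide⟩
    refine ⟨g, MulEquiv.toMonoidHom_injective <|
      MonoidHom.eq_of_eqOn_dense closure_finRotate_swap_fin_four ?_⟩
    rintro x (rfl | rfl) <;> simp [hr, hs]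

theorem exists_normal_isMulCommutative_index_eq_six :
    ∃ V : Subgroup (Perm (Fin 4)), V.Normal ∧ IsMulCommutative V ∧ V.index = 6 := by
  have h4 : Nat.card (Fin 4) = 4 := by simp
  have := alternatingGroup.characteristic_kleinFour h4
  have := (alternatingGroup.kleinFour_isKleinFour h4).isMulCommutative
  refine ⟨(alternatingGroup.kleinFour (Fin 4)).map (alternatingGroup (Fin 4)).subtype,
    inferInstance, inferInstance, ?_⟩
  have hcard := index_mul_card
    ((alternatingGroup.kleinFour (Fin 4)).map (alternatingGroup (Fin 4)).subtype)
  rw [card_map_of_injective (subtype_injective _),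
    alternatingGroup.kleinFour_card_of_card_eq_four h4, Nat.card_perm, h4] at hcard
  simp only [Nat.factorial] at hcard
  omega

end Equiv.Perm

namespace Subgroup

variable {G : Type*} [Group G] {F : Subgroup G}

instance isMulCommutative_prod {G' : Type*} [Group G'] (H : Subgroup G) (K : Subgroup G')
    [IsMulCommutative H] [IsMulCommutative K] : IsMulCommutative (H.prod K) :=
  IsMulCommutative.of_setLike_mul_comm fun _ ha _ hb =>
    Prod.ext (setLike_mul_comm ha.1 hb.1) (setLike_mul_comm ha.2 hb.2)

theorem disjoint_centralizer_of_injective_conj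
    (hF : Injective (MulAut.conj : F →* MulAut F)) : Disjoint F (centralizer (F : Set G)) := by
  rw [disjoint_def]
  intro z hzF hzC
  have hconj : MulAut.conj (⟨z, hzF⟩ : F) = 1 := by
    ext f
    simp [(mem_centralizer_iff.mp hzC f f.2).symm]
  simpa using hF (hconj.trans (map_one _).symm)

theorem exists_mem_inv_mul_mem_centralizer [F.Normal]
    (hF : Surjective (MulAut.conj : F →* MulAut F)) (g : G) :
    ∃ f ∈ F, f⁻¹ * g ∈ centralizer (F : Set G) := by
  obtain ⟨⟨f, hfF⟩, hf⟩ := hF (MulAut.conjNormal g)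
  refine ⟨f, hfF, mem_centralizer_iff.mpr fun x hx => ?_⟩
  have hgx : f * x * f⁻¹ = g * x * g⁻¹ := by
    simpa using congrArg Subtype.val (DFunLike.congr_fun hf ⟨x, hx⟩)
  calc x * (f⁻¹ * g) = f⁻¹ * (g * x * g⁻¹) * g := by rw [← hgx]; group
    _ = f⁻¹ * g * x := by group

theorem isComplement'_centralizer [F.Normal] (hF : Bijective (MulAut.conj : F →* MulAut F)) :
    F.IsComplement' (centralizer (F : Set G)) := by
  refine isComplement'_of_disjoint_and_mul_eq_univ (disjoint_centralizer_of_injective_conj hF.1)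
    (Set.eq_univ_of_forall fun g => ?_)
  obtain ⟨f, hf, hc⟩ := exists_mem_inv_mul_mem_centralizer hF.2 g
  exact ⟨f, hf, f⁻¹ * g, hc, mul_inv_cancel_left f g⟩

noncomputable def mulEquivProdCentralizer (hc : F.IsComplement' (centralizer (F : Set G))) :
    F × centralizer (F : Set G) ≃* G :=
  MulEquiv.ofBijective
    (F.subtype.noncommCoprod (centralizer (F : Set G)).subtype
      fun f c => mem_centralizer_iff.mp c.2 f f.2) hc

end Subgroup

theorem stmt_14_general {G : Type*} [Group G] (F : Subgroup G) (hFn : F.Normal)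
    (hF : Nonempty (F ≃* Equiv.Perm (Fin 4)))
    (hB : Nonempty ((G ⧸ F) ≃* Equiv.Perm (Fin 4))) :
    ∃ N : Subgroup G, N.Normal ∧ IsMulCommutative N ∧ N.index ≤ 36 := by
  obtain ⟨e⟩ := hF
  obtain ⟨q⟩ := hB
  have hc : F.IsComplement' (centralizer (F : Set G)) := isComplement'_centralizer <|
    (MulAut.conj_bijective_congr e).mpr Perm.mulAut_conj_bijective_fin_four
  let θ : centralizer (F : Set G) ≃* Perm (Fin 4) := hc.symm.QuotientMulEquiv.symm.trans q
  let Φ : G ≃* Perm (Fin 4) × Perm (Fin 4) :=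
    (mulEquivProdCentralizer hc).symm.trans (e.prodCongr θ)
  obtain ⟨V, hVn, hVc, hVi⟩ := Perm.exists_normal_isMulCommutative_index_eq_six
  refine ⟨(V.prod V).comap Φ.toMonoidHom, inferInstance,
    comap_injective_isMulCommutative _ Φ.injective, ?_⟩
  rw [index_comap_of_surjective _ Φ.surjective, index_prod, hVi]

/-- If a finite group `G` fits into `1 → S₄ → G → S₄ → 1`, then `G` contains a normal abelian
subgroup of index at most 36. -/
theorem stmt_14 {G : Type*} [Group G] [Finite G] (F : Subgroup G) (hFn : F.Normal)
    (hF : Nonempty (F ≃* Equiv.Perm (Fin 4)))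
    (hB : Nonempty ((G ⧸ F) ≃* Equiv.Perm (Fin 4))) :
    ∃ N : Subgroup G, N.Normal ∧ IsMulCommutative N ∧ N.index ≤ 36 :=
  stmt_14_general F hFn hF hB
end
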